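/- arXiv:1912.06652 — 3 statements merged into one kernel-verified Lean document; each statement's English description precedes it below -/
import Mathlib

section
/- For every odd prime p, ∑_{k=1}^{p-1} k^(p-1) ≡ p·B_{p-1} mod p² (as p-adic integers). -/
/-!
Faulhaber's formula writes `∑_{k<p} k^(p-1)` as `∑_{i ≤ p-1} B_i C(p-1,i) p^(p-i) / (p-i)`,
whose last term is `p B_{p-1}`. By von Staudt–Clausen `p B_i` is `p`-integral, so every term
with `3 ≤ p - i < p` is divisible by `p²`; the term `i = 0` is `p^(p-1)`; and the term
`i = p - 2` is `B_{p-2} (p-1) p² / 2`, where `B_{p-2}` is `p`-integral because `p - 2` is odd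
(it is `-1/2` for `p = 3` and `0` otherwise).
-/

open Finset IsUltrametricDist

theorem sum_range_pow_eq_sum_bernoulli_mul_choose {K : Type*} [Field K] [CharZero K]
    (m n : ℕ) :
    ∑ k ∈ range m, (k : K) ^ n =
      ∑ i ∈ range (n + 1),
        (bernoulli i : K) * n.choose i * (m : K) ^ (n + 1 - i) / (n + 1 - i : ℕ) := by
  have h := congrArg (Rat.cast : ℚ → K) (sum_range_pow m n)
  push_cast at h
  rw [h]
  refine sum_congr rfl fun i hi => ?_
  have hi : i < n + 1 := mem_range.mp hi
  have hchoose : (n.choose i : K) * (n + 1) = (n + 1).choose i * (n + 1 - i : ℕ) := by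
    exact_mod_cast Nat.choose_mul_succ_eq n i
  have h1 : ((n + 1 - i : ℕ) : K) ≠ 0 := Nat.cast_ne_zero.mpr (by omega)
  have h2 : (n : K) + 1 ≠ 0 := by exact_mod_cast n.succ_ne_zero
  field_simp
  linear_combination (bernoulli i : K) * (m : K) ^ (n + 1 - i) * hchoose.symm

theorem sum_Icc_one_pow_eq_sum_range_pow {R : Type*} [Semiring R] (m : ℕ) {n : ℕ}
    (hn : n ≠ 0) :
    ∑ k ∈ Icc 1 (m - 1), (k : R) ^ n = ∑ k ∈ range m, (k : R) ^ n := by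
  cases m with
  | zero => simp
  | succ m =>
    rw [sum_range_succ', Nat.add_sub_cancel, ← Ico_add_one_right_eq_Icc, sum_Ico_eq_sum_range]
    simp [zero_pow hn, add_comm]

namespace Padic

variable {p : ℕ} [hp : Fact p.Prime]

theorem norm_inv_natCast_le_of_prime {q : ℕ} (hq : q.Prime) : ‖(q : ℚ_[p])⁻¹‖ ≤ p := by
  rw [norm_inv]
  rcases eq_or_ne q p with rfl | hqp
  · rw [norm_p, inv_inv]
  · rw [norm_natCast_eq_one_iff.mpr ((Nat.coprime_primes hp.out hq).mpr hqp.symm), inv_one]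
    exact_mod_cast hp.out.one_le

theorem norm_bernoulli_le_of_odd {n : ℕ} (hn : Odd n) :
    ‖(bernoulli n : ℚ_[p])‖ ≤ ‖((2 : ℕ) : ℚ_[p])⁻¹‖ := by
  rcases eq_or_ne n 1 with rfl | hn1
  · rw [bernoulli_one, show (-1 / 2 : ℚ) = -((2 : ℕ) : ℚ)⁻¹ by norm_num]
    push_cast
    rw [norm_neg]
  · rw [bernoulli_eq_zero_of_odd hn (by grind)]
    simp

theorem norm_bernoulli_le (n : ℕ) : ‖(bernoulli n : ℚ_[p])‖ ≤ p := by
  rcases Nat.even_or_odd n with ⟨k, rfl⟩ | hn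
  · obtain ⟨z, hz⟩ := Bernoulli.vonStaudt_clausen k
    rw [← two_mul, eq_sub_of_add_eq hz.symm]
    push_cast
    rw [sub_eq_add_neg]
    refine (norm_add_le_max _ _).trans (max_le ?_ ?_)
    · exact (norm_int_le_one z).trans (by exact_mod_cast hp.out.one_le)
    · rw [norm_neg]
      refine norm_sum_le_of_forall_le_of_nonneg (by positivity) fun q hq => ?_
      rw [one_div]
      exact norm_inv_natCast_le_of_prime (mem_filter.mp hq).2.1
  · exact (norm_bernoulli_le_of_odd hn).trans (norm_inv_natCast_le_of_prime Nat.prime_two)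

theorem norm_bernoulli_le_one_of_odd (hp2 : p ≠ 2) {n : ℕ} (hn : Odd n) :
    ‖(bernoulli n : ℚ_[p])‖ ≤ 1 := by
  have h2 : ‖((2 : ℕ) : ℚ_[p])‖ = 1 :=
    norm_natCast_eq_one_iff.mpr ((Nat.coprime_primes hp.out Nat.prime_two).mpr hp2)
  exact (norm_bernoulli_le_of_odd hn).trans_eq (by rw [norm_inv, h2, inv_one])

theorem exists_eq_pow_mul_of_norm_le {x : ℚ_[p]} {n : ℕ} (h : ‖x‖ ≤ ‖(p : ℚ_[p]) ^ n‖) :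
    ∃ z : ℤ_[p], x = p ^ n * z := by
  have hpn : (p : ℚ_[p]) ^ n ≠ 0 := pow_ne_zero n (Nat.cast_ne_zero.mpr hp.out.ne_zero)
  refine ⟨⟨x / p ^ n, ?_⟩, ?_⟩
  · rw [norm_div]
    exact div_le_one_of_le₀ h (norm_nonneg _)
  · simp [mul_div_cancel₀ _ hpn]

theorem norm_bernoulli_mul_choose_mul_pow_div_le (hodd : Odd p) {i : ℕ} (hi : i < p - 1) :
    ‖(bernoulli i : ℚ_[p]) * ((p - 1).choose i : ℚ_[p]) * (p : ℚ_[p]) ^ (p - i) /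
      ((p - i : ℕ) : ℚ_[p])‖ ≤ ‖(p : ℚ_[p]) ^ 2‖ := by
  have hp2 : p ≠ 2 := hodd.ne_two_of_dvd_nat dvd_rfl
  have hp3 : 3 ≤ p := by have := hp.out.two_le; omega
  rcases Nat.eq_zero_or_pos i with rfl | hi0
  · have hp0 : (p : ℚ_[p]) ≠ 0 := Nat.cast_ne_zero.mpr hp.out.ne_zero
    have h : (p : ℚ_[p]) ^ p / p = p ^ 2 * ((p ^ (p - 3) : ℕ) : ℚ_[p]) := by
      rw [div_eq_iff hp0, Nat.cast_pow, ← pow_add, ← pow_succ]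
      congr 1
      omega
    rw [bernoulli_zero, Nat.choose_zero_right, Nat.sub_zero, Rat.cast_one, Nat.cast_one, one_mul,
      one_mul, h, norm_mul]
    exact mul_le_of_le_one_right (norm_nonneg _) (norm_natCast_le_one _ _)
  have hcop : ‖((p - i : ℕ) : ℚ_[p])‖ = 1 :=
    norm_natCast_eq_one_iff.mpr ((Nat.coprime_self_sub_right (by omega)).mpr
      (Nat.coprime_of_lt_prime hi0.ne' (by omega) hp.out))
  have hchoose : ‖((p - 1).choose i : ℚ_[p])‖ ≤ 1 := norm_natCast_le_one _ _
  rw [norm_div, hcop, div_one, norm_mul, norm_mul]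
  -- Here `p ^ (p - i)` supplies only `p ^ 2`, so `B_{p-2}` itself must be `p`-integral.
  rcases eq_or_lt_of_le (show i ≤ p - 2 by omega) with rfl | hi2
  · have hB : ‖(bernoulli (p - 2) : ℚ_[p])‖ ≤ 1 :=
      norm_bernoulli_le_one_of_odd hp2 (by obtain ⟨k, rfl⟩ := hodd; exact ⟨k - 1, by omega⟩)
    rw [show p - (p - 2) = 2 by omega]
    calc _ ≤ 1 * 1 * ‖(p : ℚ_[p]) ^ 2‖ := by gcongr
      _ = _ := by ring
  · have hpow : ‖(p : ℚ_[p]) ^ (p - i)‖ ≤ ‖(p : ℚ_[p]) ^ 3‖ := by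
      rw [norm_pow, norm_pow]
      exact pow_le_pow_of_le_one (norm_nonneg _) (norm_natCast_le_one _ _) (by omega)
    calc _ ≤ p * 1 * ‖(p : ℚ_[p]) ^ 3‖ := by gcongr; exact norm_bernoulli_le i
      _ = _ := by
        rw [norm_pow, norm_pow, norm_p]
        field_simp

end Padic

theorem stmt_4 (p : ℕ) [hp : Fact p.Prime] (hodd : Odd p) :
    ∃ z : ℤ_[p], (∑ k ∈ Finset.Icc 1 (p - 1), (k : ℚ_[p]) ^ (p - 1)) =
      (p : ℚ_[p]) * (bernoulli (p - 1) : ℚ_[p]) + (p : ℚ_[p]) ^ 2 * z := by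
  have hfaulhaber := sum_range_pow_eq_sum_bernoulli_mul_choose (K := ℚ_[p]) p (p - 1)
  rw [sum_range_succ _ (p - 1), Nat.sub_add_cancel hp.out.one_le] at hfaulhaber
  obtain ⟨z, hz⟩ := Padic.exists_eq_pow_mul_of_norm_le <|
    norm_sum_le_of_forall_le_of_nonneg (norm_nonneg _) fun i hi =>
      Padic.norm_bernoulli_mul_choose_mul_pow_div_le hodd (mem_range.mp hi)
  refine ⟨z, ?_⟩
  rw [← hz, sum_Icc_one_pow_eq_sum_range_pow p (Nat.sub_ne_zero_of_lt hp.out.one_lt), hfaulhaber,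
    Nat.sub_sub_self hp.out.one_le]
  simp only [Nat.choose_self, Nat.cast_one, mul_one, pow_one, div_one]
  ring
end

section
/- For every prime p ≥ 7 and every odd m with 3 ≤ m ≤ p-2, p² divides S_m = ∑_{l=1}^{p-1} l^m. -/
private lemma modEq_sum {s : Finset ℕ} {f g : ℕ → ℤ} {n : ℤ}
    (h : ∀ l ∈ s, f l ≡ g l [ZMOD n]) : (∑ l ∈ s, f l) ≡ ∑ l ∈ s, g l [ZMOD n] := by
  rw [Int.modEq_iff_dvd, ← Finset.sum_sub_distrib]
  exact Finset.dvd_sum fun l hl => Int.ModEq.dvd (h l hl)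

private lemma binom_modeq (a b : ℤ) : ∀ n : ℕ,
    (a + b) ^ (n + 1) ≡ a ^ (n + 1) + (n + 1) * a ^ n * b [ZMOD b ^ 2]
  | 0 => by
    have : a ^ (0 + 1) + ((0 : ℕ) + 1) * a ^ 0 * b = (a + b) ^ (0 + 1) := by push_cast; ring
    rw [this]
  | n + 1 => by
    have ih := binom_modeq a b n
    calc (a + b) ^ (n + 2) = (a + b) ^ (n + 1) * (a + b) := by ring
      _ ≡ (a ^ (n + 1) + (n + 1) * a ^ n * b) * (a + b) [ZMOD b ^ 2] :=
          ih.mul_right _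
      _ = (a ^ (n + 2) + ((n : ℤ) + 2) * a ^ (n + 1) * b) + (n + 1) * a ^ n * b ^ 2 := by
          push_cast; ring
      _ ≡ (a ^ (n + 2) + ((n : ℤ) + 2) * a ^ (n + 1) * b) + 0 [ZMOD b ^ 2] :=
          (Int.ModEq.refl _).add ((Int.modEq_zero_iff_dvd).mpr ⟨((n : ℤ) + 1) * a ^ n, by ring⟩)
      _ = a ^ (n + 2) + (↑(n + 1) + 1) * a ^ (n + 1) * b := by push_cast; ring

private lemma sum_pow_dvd (p k : ℕ) (hp : p.Prime) (hk1 : 1 ≤ k) (hk2 : k < p - 1) :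
    (p : ℤ) ∣ ∑ l ∈ Finset.Icc 1 (p - 1), (l : ℤ) ^ k := by
  haveI : Fact p.Prime := ⟨hp⟩
  have key : ∑ l ∈ Finset.Icc 1 (p - 1), (l : ZMod p) ^ k = 0 := by
    have h0 : ∑ l ∈ Finset.range p, ((l : ZMod p)) ^ k = ∑ x : ZMod p, x ^ k := by
      refine Finset.sum_nbij' (fun l => ((l : ZMod p))) (fun x : ZMod p => x.val) ?_ ?_ ?_ ?_ ?_
      · intros; exact Finset.mem_univ _
      · intro x _; exact Finset.mem_range.mpr (ZMod.val_lt x)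
      · intro l hl; exact ZMod.val_natCast_of_lt (Finset.mem_range.mp hl)
      · intro x _; simp [ZMod.natCast_val, ZMod.cast_id]
      · intros; rfl
    have h1 : Finset.range p = insert 0 (Finset.Icc 1 (p - 1)) := by
      ext l
      simp only [Finset.mem_range, Finset.mem_insert, Finset.mem_Icc]
      omega
    rw [h1, Finset.sum_insert (by simp)] at h0
    rw [Nat.cast_zero, zero_pow (by omega), zero_add] at h0
    rw [h0]
    exact FiniteField.sum_pow_lt_card_sub_one (ZMod p) k (by rwa [ZMod.card])
  have h2 : ((∑ l ∈ Finset.Icc 1 (p - 1), (l : ℤ) ^ k : ℤ) : ZMod p) = 0 := by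
    push_cast
    exact key
  exact_mod_cast (ZMod.intCast_zmod_eq_zero_iff_dvd _ p).mp h2

theorem stmt_14 (p m : ℕ) (hp : p.Prime) (hp7 : 7 ≤ p)
    (hmodd : Odd m) (hm1 : 3 ≤ m) (hm2 : m ≤ p - 2) :
    p ^ 2 ∣ ∑ l ∈ Finset.Icc 1 (p - 1), l ^ m := by
  obtain ⟨n, rfl⟩ : ∃ n, m = n + 1 := ⟨m - 1, by omega⟩
  set S : ℤ := ∑ l ∈ Finset.Icc 1 (p - 1), (l : ℤ) ^ (n + 1) with hS
  -- reflection
  have hrefl : S = ∑ l ∈ Finset.Icc 1 (p - 1), ((p : ℤ) - l) ^ (n + 1) := by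
    rw [hS]
    apply Finset.sum_nbij' (fun l => p - l) (fun l => p - l)
    · intro l hl; simp only [Finset.mem_Icc] at *; omega
    · intro l hl; simp only [Finset.mem_Icc] at *; omega
    · intro l hl; simp only [Finset.mem_Icc] at hl; omega
    · intro l hl; simp only [Finset.mem_Icc] at hl; omega
    · intro l hl
      simp only [Finset.mem_Icc] at hl
      congr 1
      have h1 : ((p - l : ℕ) : ℤ) = (p : ℤ) - l := by omega
      omega
  -- each pair
  have hterm : ∀ l : ℕ,
      (l : ℤ) ^ (n + 1) + ((p : ℤ) - l) ^ (n + 1) ≡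
        ((n : ℤ) + 1) * p * (l : ℤ) ^ n [ZMOD (p : ℤ) ^ 2] := by
    intro l
    have h := binom_modeq (-(l : ℤ)) (p : ℤ) n
    have hodd : Odd (n + 1) := hmodd
    have h1 : (-(l : ℤ) + p) ^ (n + 1) = ((p : ℤ) - l) ^ (n + 1) := by ring_nf
    have h2 : (-(l : ℤ)) ^ (n + 1) = -(l : ℤ) ^ (n + 1) := hodd.neg_pow _
    have h3 : (-(l : ℤ)) ^ n = (l : ℤ) ^ n := (Nat.Odd.sub_odd hodd odd_one).neg_pow _
    rw [h1, h2, h3] at h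
    calc (l : ℤ) ^ (n + 1) + ((p : ℤ) - l) ^ (n + 1)
        ≡ (l : ℤ) ^ (n + 1) + (-(l : ℤ) ^ (n + 1) + ((n : ℤ) + 1) * (l : ℤ) ^ n * p)
          [ZMOD (p : ℤ) ^ 2] := (Int.ModEq.refl _).add (by exact_mod_cast h)
      _ = ((n : ℤ) + 1) * p * (l : ℤ) ^ n := by ring
  have h2S : (2 : ℤ) * S ≡ ((n : ℤ) + 1) * p * ∑ l ∈ Finset.Icc 1 (p - 1), (l : ℤ) ^ n
      [ZMOD (p : ℤ) ^ 2] := by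
    have he : (2 : ℤ) * S = ∑ l ∈ Finset.Icc 1 (p - 1),
        ((l : ℤ) ^ (n + 1) + ((p : ℤ) - l) ^ (n + 1)) := by
      rw [Finset.sum_add_distrib, ← hrefl, hS]; ring
    rw [he, Finset.mul_sum]
    exact modEq_sum (fun l _ => hterm l)
  have hdvd' : (p : ℤ) ∣ ∑ l ∈ Finset.Icc 1 (p - 1), (l : ℤ) ^ n :=
    sum_pow_dvd p n hp (by omega) (by omega)
  have hdvd2 : (p : ℤ) ^ 2 ∣ ((n : ℤ) + 1) * p * ∑ l ∈ Finset.Icc 1 (p - 1), (l : ℤ) ^ n := by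
    obtain ⟨c, hc⟩ := hdvd'
    exact ⟨((n : ℤ) + 1) * c, by rw [hc]; ring⟩
  have hdvd2S : (p : ℤ) ^ 2 ∣ 2 * S := by
    have h := h2S.dvd
    have he : 2 * S = (((n : ℤ) + 1) * p * ∑ l ∈ Finset.Icc 1 (p - 1), (l : ℤ) ^ n)
        - ((((n : ℤ) + 1) * p * ∑ l ∈ Finset.Icc 1 (p - 1), (l : ℤ) ^ n) - 2 * S) := by ring
    rw [he]
    exact dvd_sub hdvd2 h
  have hScast : ((∑ l ∈ Finset.Icc 1 (p - 1), l ^ (n + 1) : ℕ) : ℤ) = S := by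
    rw [hS]; push_cast; rfl
  have hnat : p ^ 2 ∣ 2 * ∑ l ∈ Finset.Icc 1 (p - 1), l ^ (n + 1) := by
    have h2' : ((p ^ 2 : ℕ) : ℤ) ∣ ((2 * ∑ l ∈ Finset.Icc 1 (p - 1), l ^ (n + 1) : ℕ) : ℤ) := by
      rw [Nat.cast_mul, hScast, Nat.cast_pow]
      exact_mod_cast hdvd2S
    exact_mod_cast h2'
  have hcop : Nat.Coprime (p ^ 2) 2 :=
    Nat.Coprime.pow_left 2 (Nat.coprime_two_right.mpr (hp.odd_of_ne_two (by omega)))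
  exact Nat.Coprime.dvd_of_dvd_mul_left hcop hnat
end

section
/- (Sun, special case) For every prime p ≥ 5, p·B_{2(p-1)} ≡ -(p-1) + 2·p·B_{p-1} mod p² (in Z_p); consequently the second p-adic digit satisfies (p·B_{2p-2})₁ ≡ 2·(p·B_{p-1})₁ - 1 mod p. -/
/-!
Faulhaber's formula with `N = p` gives
`∑_{k<p} k^n = p B_n + ∑_{i<n} B_i (n+1 choose i) p^(n+1-i) / (n+1)`.
For `n = p - 1` and `n = 2(p - 1)` every term of the remaining sum is divisible by `p²`: the term
`i = n - 1` vanishes because `B_{n-1} = 0`, and otherwise `p^(n+1-i)` carries three factors `p`,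
one absorbing the denominator of `B_i` (weak von Staudt–Clausen `‖p B_i‖ ≤ 1`, itself obtained
from Faulhaber's formula with `N = p^(v_p(n+1)+1)`) and, when `n + 1 = p`, one absorbing `n + 1`
via `p ∣ (p choose i)`. So `p B_n` is congruent to the power sum modulo `p²`. Writing
`k^(p-1) = 1 + d_k` with `p ∣ d_k`, the power sums satisfy
`∑ k^(2(p-1)) - 2 ∑ k^(p-1) + (p - 1) = ∑_{0<k<p} d_k² ≡ 0 mod p²`.
-/

open Finset Padic

theorem Finset.sum_range_mul_eq_sum_sum {M : Type*} [AddCommMonoid M] (f : ℕ → M) (a b : ℕ) :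
    ∑ k ∈ range (a * b), f k = ∑ i ∈ range b, ∑ j ∈ range a, f (a * i + j) := by
  induction b with
  | zero => simp
  | succ b ih => rw [Nat.mul_succ, sum_range_add, ih, sum_range_succ]

theorem pow_dvd_mul_sum_range_pow (p n m : ℕ) :
    (p : ℤ) ^ m ∣ p * ∑ k ∈ range (p ^ m), (k : ℤ) ^ n := by
  induction m with
  | zero => simp
  | succ m ih =>
    have hsplit : (p : ℤ) * ∑ k ∈ range (p ^ (m + 1)), (k : ℤ) ^ n =
        p * (p * ∑ j ∈ range (p ^ m), (j : ℤ) ^ n) +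
          p * ∑ i ∈ range p, ∑ j ∈ range (p ^ m),
            (((p ^ m * i + j : ℕ) : ℤ) ^ n - (j : ℤ) ^ n) := by
      simp only [pow_succ, sum_range_mul_eq_sum_sum, sum_sub_distrib, sum_const, card_range,
        nsmul_eq_mul]
      ring
    have hterm (i j : ℕ) : (p : ℤ) ^ m ∣ ((p ^ m * i + j : ℕ) : ℤ) ^ n - (j : ℤ) ^ n := by
      have := sub_dvd_pow_sub_pow ((p ^ m * i + j : ℕ) : ℤ) j n
      push_cast at this ⊢
      rw [add_sub_cancel_right] at this
      exact (dvd_mul_right _ _).trans this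
    rw [hsplit, pow_succ']
    exact dvd_add (mul_dvd_mul_left _ ih)
      (mul_dvd_mul_left _ (dvd_sum fun i _ ↦ dvd_sum fun j _ ↦ hterm i j))

theorem sum_range_pow_eq_sum_add_bernoulli_mul {K : Type*} [Field K] [CharZero K] (n N : ℕ) :
    ∑ k ∈ range N, (k : K) ^ n =
      ∑ i ∈ range n, (bernoulli i : K) * (n + 1).choose i * (N : K) ^ (n + 1 - i) / (n + 1 : ℕ)
        + bernoulli n * N := by
  have h := congrArg (Rat.cast : ℚ → K) (sum_range_pow N n)
  push_cast at h
  rw [h, sum_range_succ, Nat.choose_succ_self_right, Nat.add_sub_cancel_left, pow_one]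
  have : (n : K) + 1 ≠ 0 := by exact_mod_cast n.succ_ne_zero
  push_cast
  field_simp

theorem sq_dvd_sum_range_pow_sub {p : ℕ} (hp : p.Prime) :
    (p : ℤ) ^ 2 ∣ ∑ k ∈ range p, (k : ℤ) ^ (2 * (p - 1))
      - 2 * ∑ k ∈ range p, (k : ℤ) ^ (p - 1) + (p - 1) := by
  obtain ⟨q, rfl⟩ : ∃ q, p = q + 1 := ⟨p - 1, (Nat.sub_add_cancel hp.one_le).symm⟩
  have hq : q ≠ 0 := by rintro rfl; exact Nat.not_prime_one hp
  have hsq (k : ℕ) : (((k + 1 : ℕ) : ℤ) ^ q - 1) ^ 2 =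
      ((k + 1 : ℕ) : ℤ) ^ (2 * q) - 2 * ((k + 1 : ℕ) : ℤ) ^ q + 1 := by ring
  have hexpand : ∑ k ∈ range (q + 1), (k : ℤ) ^ (2 * (q + 1 - 1))
      - 2 * ∑ k ∈ range (q + 1), (k : ℤ) ^ (q + 1 - 1) + ((q + 1 : ℕ) - 1) =
        ∑ k ∈ range q, (((k + 1 : ℕ) : ℤ) ^ q - 1) ^ 2 := by
    simp only [hsq, sum_range_succ' _ q, Nat.add_sub_cancel, sum_add_distrib, sum_sub_distrib,
      sum_const, card_range]
    simp [hq, mul_sum]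
  rw [hexpand]
  refine dvd_sum fun k hk ↦ pow_dvd_pow_of_dvd ?_ 2
  have hcop : IsCoprime ((k + 1 : ℕ) : ℤ) ((q + 1 : ℕ) : ℤ) :=
    Nat.isCoprime_iff_coprime.mpr (Nat.coprime_of_lt_prime k.succ_ne_zero
      (by simpa using mem_range.mp hk) hp).symm
  simpa using (Int.ModEq.pow_card_sub_one_eq_one hp hcop).symm.dvd

namespace Padic

variable {p : ℕ} [hp : Fact p.Prime]

theorem exists_eq_add_p_pow_mul_of_norm_sub_le {x y : ℚ_[p]} {k : ℕ}
    (h : ‖x - y‖ ≤ ‖(p : ℚ_[p])‖ ^ k) : ∃ z : ℤ_[p], x = y + p ^ k * z := by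
  have hpk : (p : ℚ_[p]) ^ k ≠ 0 := pow_ne_zero _ (Nat.cast_ne_zero.mpr hp.out.ne_zero)
  refine ⟨⟨(x - y) / p ^ k, ?_⟩, ?_⟩
  · rw [norm_div, norm_pow]
    exact div_le_one_of_le₀ h (by positivity)
  · change x = y + p ^ k * ((x - y) / p ^ k)
    field_simp
    ring

theorem norm_p_mul_sum_range_pow_le (n v : ℕ) :
    ‖(p : ℚ_[p]) * ∑ k ∈ range (p ^ (v + 1)), (k : ℚ_[p]) ^ n‖ ≤ ‖(p : ℚ_[p])‖ ^ (v + 1) := by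
  obtain ⟨w, hw⟩ := pow_dvd_mul_sum_range_pow p n (v + 1)
  have hcast := congrArg (Int.cast : ℤ → ℚ_[p]) hw
  push_cast at hcast
  rw [hcast, norm_mul, norm_pow]
  exact mul_le_of_le_one_right (by positivity) (norm_int_le_one w)

theorem norm_p_mul_bernoulli_le_one (n : ℕ) : ‖(p : ℚ_[p]) * bernoulli n‖ ≤ 1 := by
  induction n using Nat.strong_induction_on with
  | _ n ih =>
  set ρ := ‖(p : ℚ_[p])‖
  have hρ0 : 0 < ρ := norm_pos_iff.mpr (Nat.cast_ne_zero.mpr hp.out.ne_zero)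
  have hρ1 : ρ ≤ 1 := norm_p_lt_one.le
  set v := (n + 1).factorization p
  set N := p ^ (v + 1)
  have hN : ‖(N : ℚ_[p])‖ = ρ ^ (v + 1) := by rw [Nat.cast_pow, norm_pow]
  have hn1 : ‖((n + 1 : ℕ) : ℚ_[p])‖ = ρ ^ v := by
    rw [← Nat.ordProj_mul_ordCompl_eq_self (n + 1) p, Nat.cast_mul, norm_mul, Nat.cast_pow,
      norm_pow, norm_natCast_eq_one_iff.mpr ((Nat.coprime_ordCompl hp.out n.succ_ne_zero)), mul_one]
  have hterm : ∀ i ∈ range n, ‖(p : ℚ_[p]) * bernoulli i * (n + 1).choose i *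
      (N : ℚ_[p]) ^ (n + 1 - i) / (n + 1 : ℕ)‖ ≤ ρ ^ (v + 1) := by
    intro i hi
    have hi : i < n := mem_range.mp hi
    rw [norm_div, hn1, div_le_iff₀ (by positivity), norm_mul, norm_mul, norm_pow, hN]
    have hpow : (ρ ^ (v + 1)) ^ (n + 1 - i) ≤ (ρ ^ (v + 1)) ^ 2 :=
      pow_le_pow_of_le_one (by positivity) (pow_le_one₀ hρ0.le hρ1) (by omega)
    calc ‖(p : ℚ_[p]) * bernoulli i‖ * ‖((n + 1).choose i : ℚ_[p])‖ * (ρ ^ (v + 1)) ^ (n + 1 - i)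
        ≤ 1 * 1 * (ρ ^ (v + 1)) ^ 2 := by
          gcongr
          · exact ih i hi
          · exact IsUltrametricDist.norm_natCast_le_one ℚ_[p] _
      _ ≤ ρ ^ (v + 1) * ρ ^ v := by
          rw [one_mul, one_mul, ← pow_mul, ← pow_add]
          exact pow_le_pow_of_le_one hρ0.le hρ1 (by omega)
  have hfaul : (p : ℚ_[p]) * bernoulli n * N = p * ∑ k ∈ range N, (k : ℚ_[p]) ^ n +
      -∑ i ∈ range n, (p : ℚ_[p]) * bernoulli i * (n + 1).choose i *
        (N : ℚ_[p]) ^ (n + 1 - i) / (n + 1 : ℕ) := by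
    rw [sum_range_pow_eq_sum_add_bernoulli_mul, mul_add, mul_sum]
    simp only [mul_assoc, mul_div_assoc]
    ring
  have hsum : ‖(p : ℚ_[p]) * bernoulli n * N‖ ≤ ρ ^ (v + 1) := by
    rw [hfaul]
    refine (nonarchimedean _ _).trans (max_le (norm_p_mul_sum_range_pow_le n v) ?_)
    rw [norm_neg]
    exact IsUltrametricDist.norm_sum_le_of_forall_le_of_nonneg (by positivity) hterm
  rw [norm_mul, hN] at hsum
  exact le_of_mul_le_mul_right (by simpa using hsum) (by positivity)

theorem norm_sum_range_pow_sub_p_mul_bernoulli_le {n : ℕ} (hn : Even n) (h2n : 2 < n)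
    (hcoef : ∀ i < n, ‖(p : ℚ_[p]) * bernoulli i * (n + 1).choose i / (n + 1 : ℕ)‖ ≤ 1) :
    ‖∑ k ∈ range p, (k : ℚ_[p]) ^ n - p * bernoulli n‖ ≤ ‖(p : ℚ_[p])‖ ^ 2 := by
  rw [sum_range_pow_eq_sum_add_bernoulli_mul, mul_comm (p : ℚ_[p]), add_sub_cancel_right]
  refine IsUltrametricDist.norm_sum_le_of_forall_le_of_nonneg (by positivity) fun i hi ↦ ?_
  have hi : i < n := mem_range.mp hi
  rcases eq_or_ne i (n - 1) with rfl | hi'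
  · obtain ⟨m, rfl⟩ := hn
    rw [bernoulli_eq_zero_of_odd ⟨m - 1, by omega⟩ (by omega)]
    simp
  have hsplit : (bernoulli i : ℚ_[p]) * (n + 1).choose i * (p : ℚ_[p]) ^ (n + 1 - i) / (n + 1 : ℕ)
      = (p * bernoulli i * (n + 1).choose i / (n + 1 : ℕ)) * (p : ℚ_[p]) ^ (n - i) := by
    rw [show n + 1 - i = n - i + 1 by omega, pow_succ]
    ring
  rw [hsplit, norm_mul, norm_pow]
  exact (mul_le_of_le_one_left (by positivity) (hcoef i hi)).trans
    (pow_le_pow_of_le_one (norm_nonneg _) norm_p_lt_one.le (by omega))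

theorem norm_p_mul_bernoulli_mul_choose_div_le_one_of_coprime {n : ℕ} (hn : p.Coprime (n + 1))
    (i : ℕ) : ‖(p : ℚ_[p]) * bernoulli i * (n + 1).choose i / (n + 1 : ℕ)‖ ≤ 1 := by
  rw [norm_div, norm_natCast_eq_one_iff.mpr hn, div_one, norm_mul]
  exact mul_le_one₀ (norm_p_mul_bernoulli_le_one i) (norm_nonneg _)
    (IsUltrametricDist.norm_natCast_le_one _ _)

theorem norm_bernoulli_mul_choose_le_one {i : ℕ} (hi : i < p) :
    ‖(bernoulli i : ℚ_[p]) * p.choose i‖ ≤ 1 := by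
  rcases eq_or_ne i 0 with rfl | hi0
  · simp
  obtain ⟨c, hc⟩ := hp.out.dvd_choose_self hi0 hi
  rw [hc, Nat.cast_mul, ← mul_assoc, mul_comm (bernoulli i : ℚ_[p]), norm_mul]
  exact mul_le_one₀ (norm_p_mul_bernoulli_le_one i) (norm_nonneg _)
    (IsUltrametricDist.norm_natCast_le_one _ _)

theorem intCast_dvd_of_intCast_eq_p_mul {k : ℤ} {z : ℤ_[p]} (h : (k : ℚ_[p]) = p * z) :
    (p : ℤ) ∣ k := by
  rw [← norm_intCast_lt_one_iff, h, norm_mul]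
  exact mul_lt_one_of_nonneg_of_lt_one_left (norm_nonneg _) norm_p_lt_one z.2

end Padic

theorem stmt_19 (p : ℕ) [hp : Fact p.Prime] (hp5 : 5 ≤ p) :
    (∃ z : ℤ_[p], (p : ℚ_[p]) * (bernoulli (2 * (p - 1)) : ℚ_[p]) =
      -((p : ℚ_[p]) - 1) + 2 * (p : ℚ_[p]) * (bernoulli (p - 1) : ℚ_[p])
      + (p : ℚ_[p]) ^ 2 * z) ∧
    (∀ a b : ℤ,
      (∃ u : ℤ_[p], (p : ℚ_[p]) * (bernoulli (2 * (p - 1)) : ℚ_[p])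
        = -1 + (p : ℚ_[p]) * (a : ℚ_[p]) + (p : ℚ_[p]) ^ 2 * u) →
      (∃ v : ℤ_[p], (p : ℚ_[p]) * (bernoulli (p - 1) : ℚ_[p])
        = -1 + (p : ℚ_[p]) * (b : ℚ_[p]) + (p : ℚ_[p]) ^ 2 * v) →
      a ≡ 2 * b - 1 [ZMOD (p : ℤ)]) := by
  have hp0 : (p : ℚ_[p]) ≠ 0 := Nat.cast_ne_zero.mpr hp.out.ne_zero
  have hcoe_two : ((2 : ℤ_[p]) : ℚ_[p]) = 2 := rfl
  have hodd : Odd p := hp.out.odd_of_ne_two (by omega)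
  have hcop : p.Coprime (2 * (p - 1) + 1) :=
    (Nat.Prime.coprime_iff_not_dvd hp.out).mpr fun h ↦ hp.out.one_lt.ne'
      (Nat.dvd_one.mp ((Nat.dvd_add_right h).mp ⟨2, by omega⟩))
  obtain ⟨w₁, hw₁⟩ := exists_eq_add_p_pow_mul_of_norm_sub_le <|
    norm_sum_range_pow_sub_p_mul_bernoulli_le (n := p - 1) (Nat.Odd.sub_odd hodd odd_one)
      (by omega) fun i hi ↦ by
        rw [Nat.sub_add_cancel hp.out.one_le, mul_assoc, mul_div_cancel_left₀ _ hp0]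
        exact norm_bernoulli_mul_choose_le_one (by omega)
  obtain ⟨w₂, hw₂⟩ := exists_eq_add_p_pow_mul_of_norm_sub_le <|
    norm_sum_range_pow_sub_p_mul_bernoulli_le (even_two_mul _) (by omega)
      fun i _ ↦ norm_p_mul_bernoulli_mul_choose_div_le_one_of_coprime hcop i
  obtain ⟨V, hV⟩ := sq_dvd_sum_range_pow_sub hp.out
  have hV' := congrArg (Int.cast : ℤ → ℚ_[p]) hV
  push_cast at hV'
  have hfirst : (p : ℚ_[p]) * (bernoulli (2 * (p - 1)) : ℚ_[p]) =
      -((p : ℚ_[p]) - 1) + 2 * (p : ℚ_[p]) * (bernoulli (p - 1) : ℚ_[p])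
      + (p : ℚ_[p]) ^ 2 * ((V + 2 * w₁ - w₂ : ℤ_[p]) : ℚ_[p]) := by
    push_cast [hcoe_two]
    linear_combination hV' - hw₂ + 2 * hw₁
  refine ⟨⟨_, hfirst⟩, fun a b ⟨u, hu⟩ ⟨v, hv⟩ ↦ Int.modEq_iff_dvd.mpr ?_⟩
  refine intCast_dvd_of_intCast_eq_p_mul (z := u - 2 * v - (V + 2 * w₁ - w₂)) ?_
  refine mul_left_cancel₀ hp0 ?_
  push_cast [hcoe_two] at hfirst ⊢
  linear_combination hu - hfirst - 2 * hv
end
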